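/- arXiv:1708.08128 — 8 statements merged into one kernel-verified Lean document; each statement's English description precedes it below -/
import Mathlib

section
/- For every n ∈ ℕ, the set {x ∈ ℓ∞ : the number of indices k with xₖ ≠ 0 is at most n} is a closed subset of ℓ∞. -/
open BoundedContinuousFunction

/-- ℓ∞ is the space of bounded sequences of reals with the sup norm,
realized as bounded (continuous) functions on the discrete space ℕ. -/
theorem closed_card_support_le (n : ℕ) :
    IsClosed {x : ℕ →ᵇ ℝ | {k : ℕ | x k ≠ 0}.encard ≤ (n : ℕ∞)} := by
  rw [← isOpen_compl_iff, Metric.isOpen_iff]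
  intro x hx
  simp only [Set.mem_compl_iff, Set.mem_setOf_eq, not_le] at hx
  have hle : (n : ℕ∞) + 1 ≤ {k : ℕ | x k ≠ 0}.encard := Order.add_one_le_of_lt hx
  obtain ⟨t, hts, htc⟩ := Set.exists_subset_encard_eq hle
  have htfin : t.Finite := by
    apply Set.finite_of_encard_eq_coe (k := n + 1)
    rw [htc]; push_cast; ring
  have hne : htfin.toFinset.Nonempty := by
    rw [Set.Finite.toFinset_nonempty]
    rw [Set.nonempty_iff_ne_empty]
    intro h
    rw [h, Set.encard_empty] at htc
    exact absurd htc.symm (by exact_mod_cast Nat.succ_ne_zero n)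
  set ε := htfin.toFinset.inf' hne fun k => |x k| with hε
  have hεpos : 0 < ε := by
    rw [hε, Finset.lt_inf'_iff]
    intro k hk
    have : x k ≠ 0 := hts (htfin.mem_toFinset.1 hk)
    exact abs_pos.2 this
  refine ⟨ε, hεpos, ?_⟩
  intro y hy
  simp only [Set.mem_compl_iff, Set.mem_setOf_eq, not_le]
  have hsub : t ⊆ {k : ℕ | y k ≠ 0} := by
    intro k hk
    have h1 : ε ≤ |x k| := Finset.inf'_le _ (htfin.mem_toFinset.2 hk)
    have h2 : |y k - x k| ≤ dist y x := by
      have := BoundedContinuousFunction.dist_coe_le_dist (f := y) (g := x) k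
      rwa [Real.dist_eq] at this
    have h3 : dist y x < ε := Metric.mem_ball.1 hy
    intro h0
    rw [h0, zero_sub, abs_neg] at h2
    linarith
  calc (n : ℕ∞) < (n : ℕ∞) + 1 := by
        exact ENat.lt_add_one_iff (by simp) |>.2 le_rfl
    _ = t.encard := htc.symm
    _ ≤ _ := Set.encard_mono hsub
end

section
/- The set A₁ of eventually-zero sequences is not a Gδ subset of ℓ∞, i.e. A₁ cannot be written as a countable intersection of open subsets of ℓ∞. -/
/-!
Work in the Banach space `c₀ = closure A₁`, in which `A₁` is dense. There `A₁` is the countable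
union of the closed subspaces `{x | ∀ n ≥ m, x n = 0}`, each of them proper and hence nowhere
dense, so `A₁` is meagre in `c₀`. A dense Gδ set, on the other hand, is residual, and by Baire's
theorem no subset of a nonempty complete metric space is both meagre and residual.
-/

open BoundedContinuousFunction

/-- The set of eventually-zero sequences in ℓ∞. -/
def A₁ : Set (ℕ →ᵇ ℝ) := {x | ∃ m : ℕ, ∀ n ≥ m, x n = 0}

open Set

theorem IsGδ.not_isMeagre_of_dense {X : Type*} [TopologicalSpace X] [BaireSpace X] [Nonempty X]
    {s : Set X} (hs : IsGδ s) (hd : Dense s) : ¬ IsMeagre s := by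
  intro hm
  have hc : IsMeagre sᶜ := by
    rw [IsMeagre, compl_compl]
    exact residual_of_dense_Gδ hs hd
  exact not_isMeagre_of_isOpen isOpen_univ univ_nonempty (by simpa using hm.union hc)

theorem dense_val_preimage_closure {X : Type*} [TopologicalSpace X] (s : Set X) :
    Dense ((↑) ⁻¹' s : Set (closure s)) := by
  rw [Subtype.dense_iff, Subtype.image_preimage_coe, inter_eq_right.mpr subset_closure]

theorem Submodule.isNowhereDense_of_isClosed_of_ne_top {𝕜 E : Type*} [NontriviallyNormedField 𝕜]
    [AddCommGroup E] [TopologicalSpace E] [ContinuousAdd E] [Module 𝕜 E] [ContinuousSMul 𝕜 E]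
    {p : Submodule 𝕜 E} (hp : IsClosed (p : Set E)) (hne : p ≠ ⊤) :
    IsNowhereDense (p : Set E) := by
  have := NormedField.nhdsWithin_isUnit_neBot (α := 𝕜)
  rw [hp.isNowhereDense_iff, ← not_nonempty_iff_eq_empty]
  exact fun h => hne (p.eq_top_of_nonempty_interior' h)

theorem Submodule.not_isGδ_of_subset_iUnion {𝕜 E ι : Type*} [NontriviallyNormedField 𝕜]
    [NormedAddCommGroup E] [NormedSpace 𝕜 E] [CompleteSpace E] [Countable ι]
    {S : Submodule 𝕜 E} {F : ι → Submodule 𝕜 E} (hF : ∀ i, IsClosed (F i : Set E))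
    (hSF : (S : Set E) ⊆ ⋃ i, F i) (hS : ∀ i, ¬ S ≤ F i) : ¬ IsGδ (S : Set E) := by
  intro hG
  set Y := S.topologicalClosure
  have hdense : Dense ((S.comap Y.subtype : Submodule 𝕜 Y) : Set Y) :=
    dense_val_preimage_closure (S : Set E)
  refine (hG.preimage continuous_subtype_val).not_isMeagre_of_dense hdense ?_
  refine (isMeagre_iUnion fun i => ?_).mono (s := ⋃ i, ((F i).comap Y.subtype : Set Y)) ?_
  · refine (isNowhereDense_of_isClosed_of_ne_top
      ((hF i).preimage continuous_subtype_val) fun htop => ?_).isMeagre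
    obtain ⟨x, hxS, hxF⟩ := SetLike.not_le_iff_exists.mp (hS i)
    have : (⟨x, S.le_topologicalClosure hxS⟩ : Y) ∈ (F i).comap Y.subtype := htop ▸ trivial
    exact hxF this
  · simpa [preimage_iUnion] using preimage_mono (f := Subtype.val) hSF

def vanishingFrom (m : ℕ) : Submodule ℝ (ℕ →ᵇ ℝ) :=
  ⨅ n ≥ m, (evalCLM ℝ n : (ℕ →ᵇ ℝ) →L[ℝ] ℝ).ker

theorem mem_vanishingFrom {m : ℕ} {x : ℕ →ᵇ ℝ} : x ∈ vanishingFrom m ↔ ∀ n ≥ m, x n = 0 := by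
  simp [vanishingFrom]

theorem isClosed_vanishingFrom (m : ℕ) : IsClosed (vanishingFrom m : Set (ℕ →ᵇ ℝ)) := by
  simpa [vanishingFrom, Submodule.coe_iInf] using isClosed_iInter fun n => isClosed_iInter fun _ =>
    (evalCLM ℝ n : (ℕ →ᵇ ℝ) →L[ℝ] ℝ).isClosed_ker

theorem vanishingFrom_mono : Monotone vanishingFrom := fun _ _ hkm _ hx =>
  mem_vanishingFrom.2 fun n hn => mem_vanishingFrom.1 hx n (hkm.trans hn)

theorem coe_iSup_vanishingFrom :
    ((⨆ m, vanishingFrom m : Submodule ℝ (ℕ →ᵇ ℝ)) : Set (ℕ →ᵇ ℝ)) = ⋃ m, vanishingFrom m :=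
  Submodule.coe_iSup_of_directed _ vanishingFrom_mono.directed_le

theorem iUnion_vanishingFrom : ⋃ m, (vanishingFrom m : Set (ℕ →ᵇ ℝ)) = A₁ := by
  ext x
  simp [mem_vanishingFrom, A₁]

theorem iSup_vanishingFrom_not_le (m : ℕ) : ¬ (⨆ k, vanishingFrom k) ≤ vanishingFrom m := by
  let e : ℕ →ᵇ ℝ := ofNormedAddCommGroupDiscrete (Pi.single m 1) 1 fun n => by
    rcases eq_or_ne n m with rfl | h <;> simp [*]
  have he : e ∈ vanishingFrom (m + 1) := mem_vanishingFrom.2 fun n hn => by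
    simp [e, show n ≠ m by omega]
  intro hle
  have hem := mem_vanishingFrom.1 (hle (le_iSup vanishingFrom (m + 1) he)) m le_rfl
  simp [e] at hem

/-- A₁ is not a Gδ subset of ℓ∞: it is not a countable intersection of open sets. -/
theorem A₁_not_Gδ :
    ¬ ∃ U : ℕ → Set (ℕ →ᵇ ℝ), (∀ n, IsOpen (U n)) ∧ A₁ = ⋂ n, U n := by
  rintro ⟨U, hU, hA⟩
  refine Submodule.not_isGδ_of_subset_iUnion isClosed_vanishingFrom
    coe_iSup_vanishingFrom.subset iSup_vanishingFrom_not_le ?_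
  rw [coe_iSup_vanishingFrom, iUnion_vanishingFrom, hA]
  exact .iInter_of_isOpen hU
end

section
/- Let (Cₙ)_{n∈ℕ} be an increasing sequence of nonempty closed subsets of ℓ∞ with C = ⋃_{n∈ℕ} Cₙ, and define f : ℓ∞ → ℓ∞ by (f(x))ₙ = (1/2)·min(dist(x, Cₙ), 1), where dist(x, Cₙ) = inf{‖x − c‖∞ : c ∈ Cₙ}. Then f is well defined (f(x) is a bounded sequence for every x), and C = f⁻¹(A₁), i.e. x ∈ C if and only if (f(x))ₙ = 0 for all sufficiently large n. -/
open BoundedContinuousFunction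

/-- The map `f : ℓ∞ → ℓ∞` given by `(f x) n = (1/2) · min (dist(x, Cₙ)) 1`; it is well
defined since every coordinate lies in `[0, 1/2]`. -/
noncomputable def distMap (C : ℕ → Set (ℕ →ᵇ ℝ)) (x : ℕ →ᵇ ℝ) : ℕ →ᵇ ℝ :=
  BoundedContinuousFunction.ofNormedAddCommGroup
    (fun n => (1 / 2 : ℝ) * min (Metric.infDist x (C n)) 1)
    continuous_of_discreteTopology 1
    (fun n => by
      have h0 : (0 : ℝ) ≤ min (Metric.infDist x (C n)) 1 :=
        le_min Metric.infDist_nonneg zero_le_one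
      have h1 : min (Metric.infDist x (C n)) 1 ≤ 1 := min_le_right _ _
      rw [Real.norm_eq_abs, abs_le]
      constructor <;> nlinarith)

/-- For an increasing sequence `(Cₙ)` of nonempty closed subsets of ℓ∞ with union `C`,
the point `x` lies in `C` iff `distMap C x` is eventually zero, i.e. `C = f⁻¹(A₁)`. -/
theorem union_eq_preimage_A₁ (C : ℕ → Set (ℕ →ᵇ ℝ)) (hmono : Monotone C)
    (hne : ∀ n, (C n).Nonempty) (hcl : ∀ n, IsClosed (C n)) :
    (⋃ n, C n) = distMap C ⁻¹' A₁ := by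
  ext x
  simp only [Set.mem_iUnion, Set.mem_preimage, A₁, Set.mem_setOf_eq]
  have hcoe : ∀ n, distMap C x n = (1 / 2 : ℝ) * min (Metric.infDist x (C n)) 1 :=
    fun n => rfl
  constructor
  · rintro ⟨m, hm⟩
    refine ⟨m, fun n hn => ?_⟩
    rw [hcoe]
    have : Metric.infDist x (C n) = 0 :=
      Metric.infDist_zero_of_mem (hmono hn hm)
    simp [this]
  · rintro ⟨m, hm⟩
    refine ⟨m, ?_⟩
    have h := hm m le_rfl
    rw [hcoe] at h
    have h2 : min (Metric.infDist x (C m)) 1 = 0 := by linarith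
    have h3 : Metric.infDist x (C m) = 0 := by
      rcases min_eq_iff.mp h2 with ⟨h,_⟩|⟨h,_⟩
      · exact h
      · norm_num at h
    exact (hcl m).mem_iff_infDist_zero (hne m) |>.mpr h3
end

section
/- Let (Tₙ)_{n∈ℕ} be a partition of ℕ into pairwise disjoint infinite sets and for each n let Sₙ ⊆ ℓ∞(Tₙ) be an S-open set. Then the set ⋃_{m∈ℕ} ⋂_{n≥m} π_{Tₙ}⁻¹(Sₙ) is S-open in ℓ∞. -/
open BoundedContinuousFunction

/-- A set of bounded functions on a (discrete) index space is S-open if together with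
each of its points it contains every bounded function differing from that point in at
most one coordinate. -/
def SOpenOn {ι : Type*} [TopologicalSpace ι] (A : Set (ι →ᵇ ℝ)) : Prop :=
  ∀ a ∈ A, ∀ x : ι →ᵇ ℝ, {j : ι | x j ≠ a j}.Subsingleton → x ∈ A

/-- The coordinate projection `π_N : ℓ∞ → ℓ∞(N)`, restriction of a bounded sequence
to the coordinates in `N`. -/
def proj (N : Set ℕ) (x : ℕ →ᵇ ℝ) : ↥N →ᵇ ℝ :=
  x.compContinuous ⟨fun k => (k : ℕ), continuous_subtype_val⟩

/-- If `(Tₙ)` is a partition of ℕ into pairwise disjoint infinite sets and each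
`Sₙ ⊆ ℓ∞(Tₙ)` is S-open, then `⋃ₘ ⋂_{n ≥ m} π_{Tₙ}⁻¹(Sₙ)` is S-open in ℓ∞. -/
theorem sopen_iUnion_iInter (T : ℕ → Set ℕ)
    (hdisj : ∀ i j, i ≠ j → Disjoint (T i) (T j))
    (hinf : ∀ n, (T n).Infinite) (hcover : ⋃ n, T n = Set.univ)
    (S : ∀ n, Set (↥(T n) →ᵇ ℝ)) (hS : ∀ n, SOpenOn (S n)) :
    SOpenOn (⋃ m : ℕ, ⋂ n ≥ m, proj (T n) ⁻¹' S n) := by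
  intro a ha x hx
  simp only [Set.mem_iUnion, Set.mem_iInter, Set.mem_preimage] at ha ⊢
  obtain ⟨m, hm⟩ := ha
  refine ⟨m, fun n hn => ?_⟩
  refine hS n _ (hm n hn) _ ?_
  intro j hj k hk
  have hj' : x (j : ℕ) ≠ a (j : ℕ) := hj
  have hk' : x (k : ℕ) ≠ a (k : ℕ) := hk
  exact Subtype.ext (hx hj' hk')
end

section
/- There exists a strongly separately continuous function f : ℓ∞ → [0,1] that is a pointwise limit of a sequence of continuous functions ℓ∞ → [0,1] but is not continuous on ℓ∞. (The instance α = 0 of the main theorem; the indicator function of the set c of convergent sequences is such a function.) -/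
open BoundedContinuousFunction Filter

/-- `f : ℓ∞ → ℝ` is strongly separately continuous: at each point `x₀`, for each
coordinate `k` and each `ε > 0` there is `δ > 0` such that whenever `‖x - x₀‖ < δ`,
the value of `f` at `x` and at the point `z` obtained from `x` by replacing the `k`-th
coordinate with `x₀ k` differ by less than `ε`. -/
def SSC (f : (ℕ →ᵇ ℝ) → ℝ) : Prop :=
  ∀ (x₀ : ℕ →ᵇ ℝ) (k : ℕ), ∀ ε > (0 : ℝ), ∃ δ > (0 : ℝ), ∀ x : ℕ →ᵇ ℝ, ‖x - x₀‖ < δ →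
    ∀ z : ℕ →ᵇ ℝ, z k = x₀ k → (∀ j ≠ k, z j = x j) → |f x - f z| < ε

/-- The set of convergent sequences, viewed inside `ℓ∞`. -/
def convSet : Set (ℕ →ᵇ ℝ) := {x | ∃ L : ℝ, Tendsto (fun n => x n) atTop (nhds L)}

lemma zero_mem_convSet : (0 : ℕ →ᵇ ℝ) ∈ convSet := by
  refine ⟨0, ?_⟩
  simp only [BoundedContinuousFunction.coe_zero, Pi.zero_apply]
  exact tendsto_const_nhds

lemma isClosed_convSet : IsClosed convSet := by
  refine isClosed_of_closure_subset ?_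
  intro x hx
  have hc : CauchySeq (fun n => x n) := by
    rw [Metric.cauchySeq_iff]
    intro ε hε
    obtain ⟨y, hyC, hxy⟩ := Metric.mem_closure_iff.mp hx (ε/3) (by linarith)
    obtain ⟨L, hL⟩ := hyC
    have hyc : CauchySeq (fun n => y n) := hL.cauchySeq
    rw [Metric.cauchySeq_iff] at hyc
    obtain ⟨N, hN⟩ := hyc (ε/3) (by linarith)
    refine ⟨N, fun m hm n hn => ?_⟩
    have h1 : dist (x m) (y m) < ε/3 :=
      lt_of_le_of_lt (BoundedContinuousFunction.dist_coe_le_dist m) hxy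
    have h2 : dist (y m) (y n) < ε/3 := hN m hm n hn
    have h3 : dist (y n) (x n) < ε/3 := by
      have := lt_of_le_of_lt (BoundedContinuousFunction.dist_coe_le_dist n) hxy
      rwa [dist_comm]
    calc dist (x m) (x n) ≤ dist (x m) (y m) + dist (y m) (y n) + dist (y n) (x n) :=
          dist_triangle4 _ _ _ _
      _ < ε/3 + ε/3 + ε/3 := by linarith
      _ = ε := by ring
  exact cauchySeq_tendsto_of_complete hc

/-- the alternating sequence, as an element of ℓ∞ -/
noncomputable def alt : ℕ →ᵇ ℝ :=
  BoundedContinuousFunction.ofNormedAddCommGroup (fun n => (-1 : ℝ)^n)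
    continuous_of_discreteTopology 1 (by
      intro n
      simp [abs_pow])

lemma alt_apply (n : ℕ) : alt n = (-1 : ℝ)^n := rfl

lemma alt_not_tendsto (L : ℝ) : ¬ Tendsto (fun n => ((-1:ℝ))^n) atTop (nhds L) := by
  intro h
  have h2 : Tendsto (fun n : ℕ => 2*n) atTop atTop :=
    tendsto_atTop_mono (fun n => by simp only [id]; omega) tendsto_id
  have h3 : Tendsto (fun n : ℕ => 2*n+1) atTop atTop :=
    tendsto_atTop_mono (fun n => by simp only [id]; omega) tendsto_id
  have heven : Tendsto (fun n : ℕ => ((-1:ℝ))^(2*n)) atTop (nhds L) := h.comp h2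
  have hodd : Tendsto (fun n : ℕ => ((-1:ℝ))^(2*n+1)) atTop (nhds L) :=
    h.comp h3
  have e1 : L = 1 := by
    have : Tendsto (fun _ : ℕ => (1:ℝ)) atTop (nhds L) := by
      refine heven.congr fun n => ?_
      rw [pow_mul]; norm_num
    exact tendsto_nhds_unique this tendsto_const_nhds
  have e2 : L = -1 := by
    have : Tendsto (fun _ : ℕ => (-1:ℝ)) atTop (nhds L) := by
      refine hodd.congr fun n => ?_
      rw [pow_succ, pow_mul]; norm_num
    exact tendsto_nhds_unique this tendsto_const_nhds
  rw [e1] at e2; norm_num at e2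

lemma smul_alt_notMem {c : ℝ} (hc : c ≠ 0) : c • alt ∉ convSet := by
  rintro ⟨L, hL⟩
  have hL' : Tendsto (fun n => c * ((-1:ℝ))^n) atTop (nhds L) := by
    refine hL.congr fun n => ?_
    simp [alt_apply]
  have := hL'.const_mul (c⁻¹)
  have h2 : Tendsto (fun n => ((-1:ℝ))^n) atTop (nhds (c⁻¹ * L)) := by
    refine this.congr fun n => ?_
    field_simp
  exact alt_not_tendsto _ h2

/-- There is a strongly separately continuous `f : ℓ∞ → [0,1]` which is a pointwise
limit of continuous functions `ℓ∞ → [0,1]` but is not continuous. -/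
theorem exists_ssc_baire_one_not_continuous :
    ∃ f : (ℕ →ᵇ ℝ) → ℝ,
      (∀ x, f x ∈ Set.Icc (0 : ℝ) 1) ∧
      SSC f ∧
      (∃ g : ℕ → (ℕ →ᵇ ℝ) → ℝ, (∀ n, Continuous (g n)) ∧
        (∀ n x, g n x ∈ Set.Icc (0 : ℝ) 1) ∧
        (∀ x, Tendsto (fun n => g n x) atTop (nhds (f x)))) ∧
      ¬ Continuous f := by
  classical
  set C := convSet with hC
  refine ⟨fun x => if x ∈ C then 1 else 0, ?_, ?_, ?_, ?_⟩
  · intro x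
    by_cases hx : x ∈ C <;> simp [hx]
  · -- SSC
    intro x₀ k ε hε
    refine ⟨1, one_pos, fun x _ z hzk hz => ?_⟩
    have hiff : z ∈ C ↔ x ∈ C := by
      have heq : (fun n => z n) =ᶠ[atTop] (fun n => x n) := by
        refine eventually_atTop.mpr ⟨k+1, fun j hj => ?_⟩
        exact hz j (by omega)
      exact exists_congr fun L => tendsto_congr' heq
    show |(if x ∈ C then (1:ℝ) else 0) - (if z ∈ C then (1:ℝ) else 0)| < ε
    have : (if x ∈ C then (1:ℝ) else 0) = (if z ∈ C then (1:ℝ) else 0) := by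
      by_cases hx : x ∈ C
      · rw [if_pos hx, if_pos (hiff.mpr hx)]
      · rw [if_neg hx, if_neg (fun h => hx (hiff.mp h))]
    rw [this, sub_self, abs_zero]
    exact hε
  · -- Baire one
    refine ⟨fun n x => max 0 (1 - (n:ℝ) * Metric.infDist x C), ?_, ?_, ?_⟩
    · intro n
      exact continuous_const.max
        (continuous_const.sub (continuous_const.mul (Metric.continuous_infDist_pt C)))
    · intro n x
      constructor
      · exact le_max_left _ _
      · apply max_le (by norm_num)
        have h1 : 0 ≤ (n:ℝ) * Metric.infDist x C :=
          mul_nonneg (Nat.cast_nonneg n) (Metric.infDist_nonneg)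
        linarith
    · intro x
      show Tendsto (fun n : ℕ => max 0 (1 - (n:ℝ) * Metric.infDist x C)) atTop
        (nhds (if x ∈ C then 1 else 0))
      by_cases hx : x ∈ C
      · rw [if_pos hx]
        have hd : Metric.infDist x C = 0 := Metric.infDist_zero_of_mem hx
        have : (fun n : ℕ => max 0 (1 - (n:ℝ) * Metric.infDist x C)) = fun _ => 1 := by
          funext n; rw [hd]; norm_num
        rw [this]; exact tendsto_const_nhds
      · rw [if_neg hx]
        have hd : 0 < Metric.infDist x C := by
          have := IsClosed.notMem_iff_infDist_pos isClosed_convSet ⟨0, zero_mem_convSet⟩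
            (x := x)
          exact this.mp hx
        refine Tendsto.congr' ?_ (tendsto_const_nhds : Tendsto (fun _ : ℕ => (0:ℝ)) atTop _)
        refine eventually_atTop.mpr ⟨⌈(Metric.infDist x C)⁻¹⌉₊, fun n hn => ?_⟩
        have h1 : (Metric.infDist x C)⁻¹ ≤ (n:ℝ) := le_trans (Nat.le_ceil _) (by exact_mod_cast hn)
        have h2 : (1:ℝ) ≤ (n:ℝ) * Metric.infDist x C := by
          rw [← inv_mul_cancel₀ (ne_of_gt hd)]
          exact mul_le_mul_of_nonneg_right h1 hd.le
        symm
        apply max_eq_left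
        linarith
  · -- not continuous
    intro hcont
    have h0 : (if (0 : ℕ →ᵇ ℝ) ∈ C then (1:ℝ) else 0) = 1 := if_pos zero_mem_convSet
    have hca : ContinuousAt (fun x => if x ∈ C then (1:ℝ) else 0) 0 := hcont.continuousAt
    rw [Metric.continuousAt_iff] at hca
    obtain ⟨δ, hδ, hδ'⟩ := hca (1/2) (by norm_num)
    set y : ℕ →ᵇ ℝ := (δ/2) • alt with hy
    have hyd : dist y 0 < δ := by
      rw [dist_zero_right]
      have hle : ‖y‖ ≤ δ/2 := by
        apply (BoundedContinuousFunction.norm_le (by linarith)).mpr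
        intro n
        have : y n = (δ/2) * (-1:ℝ)^n := by
          rw [hy]; simp [alt_apply]
        rw [this, Real.norm_eq_abs, abs_mul, abs_pow]
        simp [abs_of_pos (show (0:ℝ) < δ/2 by linarith)]
      linarith
    have := hδ' hyd
    have hym : y ∉ C := smul_alt_notMem (by positivity)
    rw [if_neg hym, h0] at this
    norm_num at this
end

section
/- The indicator function of the set A₁ of eventually-zero sequences is not of Baire class 1 on ℓ∞: there is no sequence (gₙ) of continuous functions ℓ∞ → ℝ converging pointwise on ℓ∞ to the indicator function of A₁. -/
/-!
The closure `c₀` of `A₁` is complete, hence a Baire space, and inside it both `A₁` and its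
complement are dense (perturb an eventually-zero sequence by a small multiple of `(2⁻ⁿ)`).
If continuous `gₙ` converged pointwise to a function `f`, the closed sets
`Eₙ = {x | ∀ p ≥ n, dist (g p x) (g n x) ≤ ε}` would cover the space, so by Baire's theorem one
of them has interior, on which `f` is uniformly within `ε` of the continuous `gₙ`. With `ε = 1/3`
this is impossible for the indicator of a set that is dense with dense complement.
-/

open BoundedContinuousFunction Filter

open Topology Set

section BaireClassOne

variable {X : Type*} [TopologicalSpace X] [BaireSpace X] [Nonempty X]

theorem exists_isOpen_forall_dist_le_of_tendsto {Y : Type*} [PseudoMetricSpace Y]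
    {g : ℕ → X → Y} (hg : ∀ n, Continuous (g n)) {f : X → Y}
    (hf : ∀ x, Tendsto (fun n => g n x) atTop (𝓝 (f x))) {ε : ℝ} (hε : 0 < ε) :
    ∃ n, ∃ U : Set X, IsOpen U ∧ U.Nonempty ∧ ∀ x ∈ U, dist (f x) (g n x) ≤ ε := by
  set E : ℕ → Set X := fun n => ⋂ p, ⋂ (_ : n ≤ p), {x | dist (g p x) (g n x) ≤ ε}
  have hE_closed (n : ℕ) : IsClosed (E n) :=
    isClosed_iInter fun p => isClosed_iInter fun _ =>
      isClosed_le ((hg p).dist (hg n)) continuous_const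
  have hE_cover : ⋃ n, E n = univ := by
    refine eq_univ_of_forall fun x => mem_iUnion.2 ?_
    obtain ⟨N, hN⟩ := Metric.cauchySeq_iff'.1 (hf x).cauchySeq ε hε
    exact ⟨N, mem_iInter₂.2 fun p hp => (hN p hp).le⟩
  obtain ⟨n, hn⟩ := nonempty_interior_of_iUnion_of_closed hE_closed hE_cover
  refine ⟨n, interior (E n), isOpen_interior, hn, fun x hx => ?_⟩
  have hxE := mem_iInter₂.1 (interior_subset hx)
  exact le_of_tendsto ((hf x).dist tendsto_const_nhds)
    (eventually_atTop.2 ⟨n, fun p hp => hxE p hp⟩)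

theorem not_tendsto_indicator_one_of_dense_of_dense_compl {S : Set X} (hS : Dense S)
    (hSc : Dense Sᶜ) {g : ℕ → X → ℝ} (hg : ∀ n, Continuous (g n)) :
    ¬ ∀ x, Tendsto (fun n => g n x) atTop (𝓝 (S.indicator (fun _ => (1 : ℝ)) x)) := by
  intro hlim
  obtain ⟨n, U, hU, hU_ne, hclose⟩ :=
    exists_isOpen_forall_dist_le_of_tendsto hg hlim (by norm_num : (0 : ℝ) < 1 / 3)
  obtain ⟨x, hxS, hxU⟩ := hS.exists_mem_open hU hU_ne
  have hV : IsOpen (U ∩ g n ⁻¹' Metric.ball (g n x) (1 / 3)) :=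
    hU.inter (Metric.isOpen_ball.preimage (hg n))
  obtain ⟨y, hyS, hyU, hyx⟩ :=
    hSc.exists_mem_open hV ⟨x, hxU, Metric.mem_ball_self (by norm_num)⟩
  have hx := hclose x hxU
  have hy := hclose y hyU
  rw [indicator_of_mem hxS, Real.dist_eq, abs_le] at hx
  rw [indicator_of_notMem hyS, Real.dist_eq, abs_le] at hy
  rw [mem_preimage, Metric.mem_ball, Real.dist_eq, abs_lt] at hyx
  linarith [hx.1, hy.2, hyx.1]

end BaireClassOne

theorem Subtype.dense_preimage_coe_iff {X : Type*} [TopologicalSpace X] {s t : Set X} :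
    Dense ((↑) ⁻¹' t : Set s) ↔ s ⊆ closure (s ∩ t) := by
  rw [Subtype.dense_iff, Subtype.image_preimage_coe]

lemma mem_A₁_iff_eventually {x : ℕ →ᵇ ℝ} : x ∈ A₁ ↔ ∀ᶠ n in atTop, x n = 0 :=
  eventually_atTop.symm

lemma zero_mem_A₁ : (0 : ℕ →ᵇ ℝ) ∈ A₁ := ⟨0, fun _ _ => rfl⟩

lemma tendsto_zero_of_mem_A₁ {x : ℕ →ᵇ ℝ} (hx : x ∈ A₁) : Tendsto (⇑x) atTop (𝓝 0) :=
  tendsto_const_nhds.congr' <| (mem_A₁_iff_eventually.1 hx).mono fun _ h => h.symm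

noncomputable def truncate (z : ℕ →ᵇ ℝ) (m : ℕ) : ℕ →ᵇ ℝ :=
  ofNormedAddCommGroupDiscrete (fun n => if n < m then z n else 0) ‖z‖ fun n => by
    split_ifs
    · exact z.norm_coe_le_norm n
    · simp

lemma truncate_apply (z : ℕ →ᵇ ℝ) (m n : ℕ) : truncate z m n = if n < m then z n else 0 := rfl

lemma truncate_mem_A₁ (z : ℕ →ᵇ ℝ) (m : ℕ) : truncate z m ∈ A₁ :=
  ⟨m, fun n hn => by rw [truncate_apply, if_neg (not_lt.2 hn)]⟩

lemma mem_closure_A₁_of_tendsto_zero {z : ℕ →ᵇ ℝ} (hz : Tendsto (⇑z) atTop (𝓝 0)) :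
    z ∈ closure A₁ := by
  refine Metric.mem_closure_iff.2 fun ε hε => ?_
  obtain ⟨m, hm⟩ := Metric.tendsto_atTop.1 hz (ε / 2) (half_pos hε)
  refine ⟨truncate z m, truncate_mem_A₁ z m, ?_⟩
  have hdist : dist z (truncate z m) ≤ ε / 2 := by
    refine (dist_le (half_pos hε).le).2 fun n => ?_
    rw [truncate_apply]
    split_ifs with hn
    · simpa using (half_pos hε).le
    · simpa using (hm n (not_lt.1 hn)).le
  linarith

noncomputable def geo : ℕ →ᵇ ℝ :=
  ofNormedAddCommGroupDiscrete (fun n => (1 / 2 : ℝ) ^ n) 1 fun n => by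
    rw [Real.norm_eq_abs, abs_of_nonneg (by positivity)]
    exact pow_le_one₀ (by norm_num) (by norm_num)

lemma geo_apply (n : ℕ) : geo n = (1 / 2 : ℝ) ^ n := rfl

lemma tendsto_geo : Tendsto (⇑geo) atTop (𝓝 0) :=
  tendsto_pow_atTop_nhds_zero_of_lt_one (by norm_num) (by norm_num)

lemma add_smul_geo_notMem_A₁ {x : ℕ →ᵇ ℝ} (hx : x ∈ A₁) {δ : ℝ} (hδ : δ ≠ 0) :
    x + δ • geo ∉ A₁ := by
  intro hy
  obtain ⟨n, hyn, hxn⟩ := ((mem_A₁_iff_eventually.1 hy).and (mem_A₁_iff_eventually.1 hx)).exists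
  simp only [coe_add, coe_smul, Pi.add_apply, smul_eq_mul, hxn, zero_add,
    geo_apply] at hyn
  exact mul_ne_zero hδ (by positivity) hyn

lemma A₁_subset_closure_diff : A₁ ⊆ closure (closure A₁ \ A₁) := by
  intro x hx
  have hlim : Tendsto (fun δ : ℝ => x + δ • geo) (𝓝[≠] 0) (𝓝 x) := by
    have : Tendsto (fun δ : ℝ => x + δ • geo) (𝓝 0) (𝓝 (x + (0 : ℝ) • geo)) :=
      tendsto_const_nhds.add (tendsto_id.smul_const geo)
    rw [zero_smul, add_zero] at this
    exact this.mono_left nhdsWithin_le_nhds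
  refine mem_closure_of_tendsto hlim (eventually_nhdsWithin_of_forall fun δ hδ => ⟨?_, ?_⟩)
  · have : Tendsto (fun n => x n + δ • geo n) atTop (𝓝 0) := by
      simpa using (tendsto_zero_of_mem_A₁ hx).add (tendsto_geo.const_smul δ)
    exact mem_closure_A₁_of_tendsto_zero this
  · exact add_smul_geo_notMem_A₁ hx hδ

/-- The indicator of `A₁` is not of Baire class 1 on ℓ∞: no sequence of continuous
functions `ℓ∞ → ℝ` converges pointwise to it. -/
theorem indicator_A₁_not_baire_one :
    ¬ ∃ g : ℕ → (ℕ →ᵇ ℝ) → ℝ, (∀ n, Continuous (g n)) ∧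
      ∀ x : ℕ →ᵇ ℝ,
        Tendsto (fun n => g n x) atTop (nhds (A₁.indicator (fun _ => (1 : ℝ)) x)) := by
  rintro ⟨g, hg, hlim⟩
  have : CompleteSpace (closure A₁) := isClosed_closure.completeSpace_coe
  have : Nonempty (closure A₁) := ⟨⟨0, subset_closure zero_mem_A₁⟩⟩
  have hdense : Dense ((↑) ⁻¹' A₁ : Set (closure A₁)) := by
    rw [Subtype.dense_preimage_coe_iff, inter_eq_right.2 subset_closure]
  have hdense_compl : Dense ((↑) ⁻¹' A₁ : Set (closure A₁))ᶜ := by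
    rw [← preimage_compl, Subtype.dense_preimage_coe_iff, ← sdiff_eq]
    exact closure_minimal A₁_subset_closure_diff isClosed_closure
  refine not_tendsto_indicator_one_of_dense_of_dense_compl hdense hdense_compl
    (fun n => (hg n).comp continuous_subtype_val) fun x => hlim x
end

section
/- Let (Tₙ)_{n∈ℕ} be a partition of ℕ into pairwise disjoint infinite sets and let A₂ = ⋃_{m∈ℕ} ⋂_{n≥m} π_{Tₙ}⁻¹(B₁ⁿ), where B₁ⁿ is the set of z ∈ ℓ∞(Tₙ) that are not eventually zero. Then A₂ cannot be written as a countable intersection of Fσ subsets of ℓ∞ (i.e. A₂ does not belong to the second multiplicative Borel class). -/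
/-!
Choose a bijection `e : ℕ × ℕ ≃ ℕ` mapping each row `{n} × ℕ` onto `Tₙ`; then `A₂` is the set of
sequences whose rows are, from some index on, all not eventually zero. In the closed set of
sequences taking at `e (n, i)` only the values `0` and `2⁻¹ ^ i`, the cylinders of points that agree
with a given one on the first `N` rows and the first `N` columns are closed, of diameter at most
`2⁻¹ ^ N`, and in each of them the points with all rows from `N` on infinite form a dense `Gδ`.
So if `A₂ ⊆ F` with `F` an Fσ, Baire's theorem puts a relative ball of the cylinder inside `F`, and
that ball contains a smaller cylinder in which one new row `n ≥ m` is frozen to be eventually zero.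
Doing this for each `Fₘ` in turn and intersecting the nested cylinders gives a point of `⋂ₘ Fₘ`
with infinitely many eventually-zero rows, hence not in `A₂`.
-/

open BoundedContinuousFunction

/-- A subset of ℓ∞ is Fσ if it is a countable union of closed sets. -/
def IsFσ (F : Set (ℕ →ᵇ ℝ)) : Prop :=
  ∃ C : ℕ → Set (ℕ →ᵇ ℝ), (∀ m, IsClosed (C m)) ∧ F = ⋃ m, C m

open Function in
theorem exists_prod_equiv_of_partition {ι : Type*} (T : ι → Set ℕ)
    (hdisj : Pairwise (Disjoint on T)) (hinf : ∀ n, (T n).Infinite)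
    (hcover : ⋃ n, T n = Set.univ) :
    ∃ e : ι × ℕ ≃ ℕ, ∀ n, ∃ σ : ℕ ≃ T n, ∀ i, e (n, i) = σ i := by
  have σ : ∀ n, ℕ ≃ T n := fun n =>
    have := (hinf n).to_subtype
    (nonempty_denumerable (T n)).some.eqv.symm
  exact ⟨(Equiv.sigmaEquivProd ι ℕ).symm.trans <| (Equiv.sigmaCongrRight σ).trans <|
    (Set.unionEqSigmaOfDisjoint hdisj).symm.trans <|
      (Equiv.setCongr hcover).trans (Equiv.Set.univ ℕ),
    fun n => ⟨σ n, fun _ => rfl⟩⟩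

section Grid

open Set Metric

variable (e : ℕ × ℕ ≃ ℕ)

def rowsInfinite : Set (ℕ →ᵇ ℝ) :=
  ⋃ m, ⋂ n ≥ m, {x | {i | x (e (n, i)) ≠ 0}.Infinite}

noncomputable def gridPoint (S : Set (ℕ × ℕ)) : ℕ →ᵇ ℝ :=
  ofNormedAddCommGroupDiscrete (fun k => S.indicator (fun p => (2⁻¹ : ℝ) ^ p.2) (e.symm k)) 1
    fun k => (norm_indicator_le_norm_self _ _).trans <| by
      rw [norm_pow, norm_inv, Real.norm_two]
      exact pow_le_one₀ (by norm_num) (by norm_num)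

variable {e}

theorem gridPoint_apply (S : Set (ℕ × ℕ)) (p : ℕ × ℕ) :
    gridPoint e S (e p) = S.indicator (fun p => (2⁻¹ : ℝ) ^ p.2) p := by
  simp [gridPoint]

theorem gridPoint_apply_ne_zero_iff {S : Set (ℕ × ℕ)} {p : ℕ × ℕ} :
    gridPoint e S (e p) ≠ 0 ↔ p ∈ S := by
  by_cases hp : p ∈ S <;> simp [gridPoint_apply, hp]

theorem gridPoint_apply_eq_iff {S T : Set (ℕ × ℕ)} {p : ℕ × ℕ} :
    gridPoint e S (e p) = gridPoint e T (e p) ↔ (p ∈ S ↔ p ∈ T) := by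
  have : (0 : ℝ) ≠ 2 ^ p.2 := (pow_pos two_pos _).ne
  by_cases hS : p ∈ S <;> by_cases hT : p ∈ T <;> simp [gridPoint_apply, hS, hT, this]

theorem gridPoint_apply_mem_Icc (S : Set (ℕ × ℕ)) (p : ℕ × ℕ) :
    gridPoint e S (e p) ∈ Icc 0 ((2⁻¹ : ℝ) ^ p.2) := by
  by_cases hp : p ∈ S <;> simp [gridPoint_apply, hp]

theorem dist_gridPoint_le {S T : Set (ℕ × ℕ)} {l : ℕ} (h : ∀ p : ℕ × ℕ, p.2 < l → (p ∈ S ↔ p ∈ T)) :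
    dist (gridPoint e S) (gridPoint e T) ≤ 2⁻¹ ^ l := by
  refine (dist_le (by positivity)).2 fun k => ?_
  obtain ⟨p, rfl⟩ := e.surjective k
  rcases lt_or_ge p.2 l with hp | hp
  · simp [gridPoint_apply_eq_iff.2 (h p hp)]
  · have hmono : Icc 0 ((2⁻¹ : ℝ) ^ p.2) ⊆ Icc 0 (2⁻¹ ^ l) :=
      Icc_subset_Icc_right (pow_le_pow_of_le_one (by norm_num) (by norm_num) hp)
    simpa using Real.dist_le_of_mem_Icc (hmono (gridPoint_apply_mem_Icc S p))
      (hmono (gridPoint_apply_mem_Icc T p))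

theorem isClosed_range_gridPoint : IsClosed (range (gridPoint e)) := by
  have : range (gridPoint e) = ⋂ p, (fun x : ℕ →ᵇ ℝ => x (e p)) ⁻¹' {0, 2⁻¹ ^ p.2} := by
    refine Subset.antisymm (range_subset_iff.2 fun S => mem_iInter.2 fun p => ?_) fun x hx => ?_
    · by_cases hp : p ∈ S <;> simp [gridPoint_apply, hp]
    · refine ⟨{p | x (e p) ≠ 0}, ext fun k => ?_⟩
      obtain ⟨p, rfl⟩ := e.surjective k
      have hp : x (e p) = 0 ∨ x (e p) = 2⁻¹ ^ p.2 := mem_iInter.1 hx p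
      rcases hp with h | h <;> simp [gridPoint_apply, h]
  rw [this]
  exact isClosed_iInter fun p => (Set.toFinite _).isClosed.preimage (continuous_eval_const _)

variable (e) in
def cylinder (N : ℕ) (S : Set (ℕ × ℕ)) : Set (ℕ →ᵇ ℝ) :=
  gridPoint e '' {T | ∀ p : ℕ × ℕ, p.1 < N ∨ p.2 < N → (p ∈ T ↔ p ∈ S)}

theorem gridPoint_mem_cylinder (N : ℕ) (S : Set (ℕ × ℕ)) : gridPoint e S ∈ cylinder e N S :=
  ⟨S, fun _ _ => Iff.rfl, rfl⟩

theorem isClosed_cylinder (N : ℕ) (S : Set (ℕ × ℕ)) : IsClosed (cylinder e N S) := by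
  have : cylinder e N S = range (gridPoint e) ∩
      ⋂ p ∈ {p : ℕ × ℕ | p.1 < N ∨ p.2 < N}, {x | x (e p) = gridPoint e S (e p)} := by
    ext x
    constructor
    · rintro ⟨T, hT, rfl⟩
      exact ⟨mem_range_self T, mem_iInter₂.2 fun p hp => gridPoint_apply_eq_iff.2 (hT p hp)⟩
    · rintro ⟨⟨T, rfl⟩, hT⟩
      exact ⟨T, fun p hp => gridPoint_apply_eq_iff.1 (mem_iInter₂.1 hT p hp), rfl⟩
  rw [this]
  exact isClosed_range_gridPoint.inter <| isClosed_biInter fun p _ =>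
    isClosed_eq (continuous_eval_const _) continuous_const

theorem dist_le_of_mem_cylinder {N : ℕ} {S : Set (ℕ × ℕ)} {x y : ℕ →ᵇ ℝ}
    (hx : x ∈ cylinder e N S) (hy : y ∈ cylinder e N S) : dist x y ≤ 2⁻¹ ^ N := by
  obtain ⟨T, hT, rfl⟩ := hx
  obtain ⟨T', hT', rfl⟩ := hy
  exact dist_gridPoint_le fun p hp => (hT p (Or.inr hp)).trans (hT' p (Or.inr hp)).symm

theorem dense_setOf_exists_ne_zero {N n : ℕ} {S : Set (ℕ × ℕ)} (hn : N ≤ n) (j : ℕ) :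
    Dense {x : cylinder e N S | ∃ i ≥ j, (x : ℕ →ᵇ ℝ) (e (n, i)) ≠ 0} := by
  refine Metric.dense_iff.2 ?_
  rintro ⟨_, T, hT, rfl⟩ ε hε
  obtain ⟨k, hk⟩ : ∃ k, (2⁻¹ : ℝ) ^ k < ε := exists_pow_lt_of_lt_one hε (by norm_num)
  set i := max k (max j N)
  refine ⟨⟨gridPoint e (insert (n, i) T), insert (n, i) T, fun p hp => ?_, rfl⟩, ?_,
    i, by omega, gridPoint_apply_ne_zero_iff.2 (mem_insert _ _)⟩
  · have : p ≠ (n, i) := by rintro rfl; omega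
    simpa [this] using hT p hp
  · rw [mem_ball, Subtype.dist_eq]
    calc dist (gridPoint e (insert (n, i) T)) (gridPoint e T) ≤ 2⁻¹ ^ i :=
          dist_gridPoint_le fun p hp => by
            have : p ≠ (n, i) := by rintro rfl; omega
            simp [this]
      _ ≤ 2⁻¹ ^ k := pow_le_pow_of_le_one (by norm_num) (by norm_num) (by omega)
      _ < ε := hk

theorem exists_ball_inter_cylinder_subset {F : Set (ℕ →ᵇ ℝ)} (hF : IsFσ F)
    (hAF : rowsInfinite e ⊆ F) (N : ℕ) (S : Set (ℕ × ℕ)) :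
    ∃ u ∈ cylinder e N S, ∃ ε > 0, ∀ x ∈ cylinder e N S, dist x u < ε → x ∈ F := by
  obtain ⟨C, hC, rfl⟩ := hF
  have : CompleteSpace (cylinder e N S) := (isClosed_cylinder N S).completeSpace_coe
  have : Nonempty (cylinder e N S) := ⟨⟨_, gridPoint_mem_cylinder N S⟩⟩
  let G : ℕ × ℕ → Set (cylinder e N S) := fun q =>
    {x | ∃ i ≥ q.2, (x : ℕ →ᵇ ℝ) (e (q.1 + N, i)) ≠ 0}
  have hGo : ∀ q, IsOpen (G q) := fun q => by
    have : G q = ⋃ i ≥ q.2, {x : cylinder e N S | (x : ℕ →ᵇ ℝ) (e (q.1 + N, i)) ≠ 0} := by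
      ext; simp [G]
    rw [this]
    exact isOpen_biUnion fun i _ => isOpen_ne_fun (by fun_prop) continuous_const
  have hGd : ∀ q, Dense (G q) := fun q => dense_setOf_exists_ne_zero (by omega) q.2
  have hGC : ⋂ q, G q ⊆ ⋃ j, Subtype.val ⁻¹' C j := fun x hx => by
    have hxA : (x : ℕ →ᵇ ℝ) ∈ rowsInfinite e := by
      refine mem_iUnion.2 ⟨N, mem_iInter₂.2 fun n hn => infinite_of_forall_exists_gt fun j => ?_⟩
      obtain ⟨i, hi, hne⟩ := mem_iInter.1 hx (n - N, j + 1)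
      exact ⟨i, by simpa [Nat.sub_add_cancel hn] using hne, hi⟩
    simpa using hAF hxA
  obtain ⟨j, u, hu⟩ : ∃ j, (interior (Subtype.val ⁻¹' C j : Set (cylinder e N S))).Nonempty := by
    simpa using ((IsGδ.iInter_of_isOpen hGo).dense_iUnion_interior_of_closed
      (dense_iInter_of_isOpen hGo hGd) (fun j => (hC j).preimage continuous_subtype_val)
      hGC).nonempty
  obtain ⟨ε, hε, hball⟩ := Metric.isOpen_iff.1 isOpen_interior u hu
  exact ⟨u, u.2, ε, hε, fun x hx hxu => mem_iUnion.2
    ⟨j, interior_subset (s := Subtype.val ⁻¹' C j) (hball (show ⟨x, hx⟩ ∈ ball u ε from hxu))⟩⟩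

theorem exists_cylinder_subset_inter {F : Set (ℕ →ᵇ ℝ)} (hF : IsFσ F)
    (hAF : rowsInfinite e ⊆ F) (N : ℕ) (S : Set (ℕ × ℕ)) (m : ℕ) :
    ∃ N' S', N < N' ∧ cylinder e N' S' ⊆ cylinder e N S ∩ F ∧
      ∃ n ≥ m, ∀ x ∈ cylinder e N' S', {i | x (e (n, i)) ≠ 0}.Finite := by
  obtain ⟨_, ⟨U, hU, rfl⟩, ε, hε, hball⟩ := exists_ball_inter_cylinder_subset hF hAF N S
  obtain ⟨k, hk⟩ : ∃ k, (2⁻¹ : ℝ) ^ k < ε := exists_pow_lt_of_lt_one hε (by norm_num)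
  set n := max N m
  set N' := max (n + 1) k
  refine ⟨N', U \ {p | p.1 = n ∧ N' ≤ p.2}, by omega, ?_, n, le_max_right _ _, ?_⟩
  · rintro _ ⟨T, hT, rfl⟩
    have hTS : gridPoint e T ∈ cylinder e N S := ⟨T, fun p hp => by
      have := hT p (by omega)
      have := hU p hp
      simp only [mem_sdiff, mem_ofPred_eq] at *
      constructor <;> intro <;> simp_all; omega, rfl⟩
    refine ⟨hTS, hball _ hTS ?_⟩
    calc dist (gridPoint e T) (gridPoint e U) ≤ 2⁻¹ ^ N' := dist_gridPoint_le fun p hp => by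
          simpa [hp.not_ge] using hT p (Or.inr hp)
      _ ≤ 2⁻¹ ^ k := pow_le_pow_of_le_one (by norm_num) (by norm_num) (by omega)
      _ < ε := hk
  · rintro _ ⟨T, hT, rfl⟩
    refine (finite_Iio N').subset fun i hi => ?_
    have := (hT (n, i) (Or.inl (by omega))).1 (gridPoint_apply_ne_zero_iff.1 hi)
    simp only [mem_sdiff, mem_ofPred_eq, true_and, not_le] at this
    exact this.2

theorem exists_mem_iInter_notMem_rowsInfinite {F : ℕ → Set (ℕ →ᵇ ℝ)} (hF : ∀ m, IsFσ (F m))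
    (hAF : ∀ m, rowsInfinite e ⊆ F m) : ∃ x ∈ ⋂ m, F m, x ∉ rowsInfinite e := by
  choose N' S' hlt hsub hrow using fun m (q : ℕ × Set (ℕ × ℕ)) =>
    exists_cylinder_subset_inter (hF m) (hAF m) q.1 q.2 m
  let q : ℕ → ℕ × Set (ℕ × ℕ) := fun k => Nat.rec (0, ∅) (fun m q => (N' m q, S' m q)) k
  let V : ℕ → Set (ℕ →ᵇ ℝ) := fun k => cylinder e (q k).1 (q k).2
  have hV : ∀ k, V (k + 1) ⊆ V k ∩ F k := fun k => hsub k (q k)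
  have hanti : Antitone V := antitone_nat_of_succ_le fun k => (hV k).trans inter_subset_left
  have hq : ∀ k, k ≤ (q k).1 := fun k => by
    induction k with
    | zero => exact le_rfl
    | succ k ih => exact ih.trans_lt (hlt k (q k))
  have hdiam : ∀ k, diam (V k) ≤ 2⁻¹ ^ k := fun k =>
    diam_le_of_forall_dist_le (by positivity) fun x hx y hy =>
      (dist_le_of_mem_cylinder hx hy).trans
        (pow_le_pow_of_le_one (by norm_num) (by norm_num) (hq k))
  obtain ⟨x, hx⟩ : (⋂ k, V k).Nonempty := by
    refine nonempty_iInter_of_nonempty_biInter (fun k => isClosed_cylinder _ _)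
      (fun k => isBounded_iff.2 ⟨_, fun x hx y hy => dist_le_of_mem_cylinder hx hy⟩)
      (fun k => ⟨_, mem_iInter₂.2 fun l hl => hanti hl (gridPoint_mem_cylinder _ _)⟩) ?_
    exact squeeze_zero (fun k => diam_nonneg) hdiam
      (tendsto_pow_atTop_nhds_zero_of_lt_one (by norm_num) (by norm_num))
  refine ⟨x, mem_iInter.2 fun m => (hV m (mem_iInter.1 hx (m + 1))).2, fun hxA => ?_⟩
  obtain ⟨m, hm⟩ := mem_iUnion.1 hxA
  obtain ⟨n, hnm, hfin⟩ := hrow m (q m)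
  exact mem_iInter₂.1 hm n hnm (hfin x (mem_iInter.1 hx (m + 1)))

end Grid

theorem iUnion_iInter_proj_eq_rowsInfinite {T : ℕ → Set ℕ} {e : ℕ × ℕ ≃ ℕ}
    (he : ∀ n, ∃ σ : ℕ ≃ T n, ∀ i, e (n, i) = σ i) :
    (⋃ m : ℕ, ⋂ n ≥ m,
      proj (T n) ⁻¹' {z : ↥(T n) →ᵇ ℝ | ¬ {k : ↥(T n) | z k ≠ 0}.Finite}) =
    rowsInfinite e := by
  refine Set.iUnion_congr fun m => Set.iInter₂_congr fun n _ => Set.ext fun x => ?_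
  obtain ⟨σ, hσ⟩ := he n
  have : {i | x (e (n, i)) ≠ 0} = σ ⁻¹' {k : ↥(T n) | proj (T n) x k ≠ 0} := by
    ext i; simp [hσ, proj]
  rw [Set.mem_preimage, Set.mem_ofPred_eq, Set.mem_ofPred_eq, Set.Infinite, this]
  exact not_congr ⟨fun h => h.preimage σ.injective.injOn, fun h => h.of_preimage σ.surjective⟩

/-- For a partition `(Tₙ)` of ℕ into pairwise disjoint infinite sets, the set
`A₂ = ⋃ₘ ⋂_{n ≥ m} π_{Tₙ}⁻¹(B₁ⁿ)`, where `B₁ⁿ` is the set of elements of `ℓ∞(Tₙ)`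
that are not eventually zero, is not a countable intersection of Fσ subsets of ℓ∞. -/
theorem A₂_not_countable_inter_of_Fσ (T : ℕ → Set ℕ)
    (hdisj : ∀ i j, i ≠ j → Disjoint (T i) (T j))
    (hinf : ∀ n, (T n).Infinite) (hcover : ⋃ n, T n = Set.univ) :
    ¬ ∃ F : ℕ → Set (ℕ →ᵇ ℝ), (∀ m, IsFσ (F m)) ∧
      (⋃ m : ℕ, ⋂ n ≥ m,
        proj (T n) ⁻¹' {z : ↥(T n) →ᵇ ℝ | ¬ {k : ↥(T n) | z k ≠ 0}.Finite}) =
      ⋂ m, F m := by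
  rintro ⟨F, hF, hA⟩
  obtain ⟨e, he⟩ := exists_prod_equiv_of_partition T (fun i j => hdisj i j) hinf hcover
  rw [iUnion_iInter_proj_eq_rowsInfinite he] at hA
  obtain ⟨x, hxF, hxA⟩ :=
    exists_mem_iInter_notMem_rowsInfinite hF fun m => hA ▸ Set.iInter_subset F m
  exact hxA (hA ▸ hxF)
end

section
/- There exists a strongly separately continuous function f : ℓ∞ → [0,1] that is of Baire class 3 but not of Baire class 2 on ℓ∞: f is a pointwise limit of a sequence of Baire class 2 functions, but f is not a pointwise limit of any sequence of Baire class 1 functions. (The instance α = 2 of the main theorem; the indicator function of the set A₂ = ⋃_{m} ⋂_{n≥m} π_{Tₙ}⁻¹(B₁ⁿ), for any partition (Tₙ) of ℕ into infinite sets, is such a function.) -/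
open BoundedContinuousFunction Filter

/-- `f` is of Baire class 1: a pointwise limit of a sequence of continuous functions. -/
def BaireOne (f : (ℕ →ᵇ ℝ) → ℝ) : Prop :=
  ∃ g : ℕ → (ℕ →ᵇ ℝ) → ℝ, (∀ n, Continuous (g n)) ∧
    ∀ x, Tendsto (fun n => g n x) atTop (nhds (f x))

/-- `f` is of Baire class 2: a pointwise limit of a sequence of Baire class 1 functions. -/
def BaireTwo (f : (ℕ →ᵇ ℝ) → ℝ) : Prop :=
  ∃ g : ℕ → (ℕ →ᵇ ℝ) → ℝ, (∀ n, BaireOne (g n)) ∧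
    ∀ x, Tendsto (fun n => g n x) atTop (nhds (f x))

/-!
Index the coordinates of `ℓ∞` by pairs `(i, j)` through `Nat.pair`, and let `A` be the set of
points all of whose rows `j ↦ x (i, j)`, except finitely many, do not tend to `0`. The indicator
of `A` only depends on the tail of `x`, so it is strongly separately continuous, and `A` is an
increasing union of `G_δ` sets, so the indicator is of Baire class 3.

If it were a limit of Baire class 1 functions, `Aᶜ` would be a countable union of `G_δ` sets
`G_N`. In the closed set of points with `0 ≤ x (i, j) ≤ 2⁻ⁱ` whose rows in a finite set `R`
vanish, the rows outside `R` give dense open sets whose intersection lies in `A`, so by Baire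
each `G_N` is nowhere dense there. Alternately moving away from `G_N` and freezing one more,
arbitrarily far, row to `0` (a perturbation of size `2⁻ⁱ`) produces nested balls whose common
point has infinitely many zero rows, so it lies in `Aᶜ` but in no `G_N`.
-/

open Set Metric Topology

namespace SSCBaireThree

section

variable {X : Type*} [TopologicalSpace X]

theorem not_subset_closure_of_disjoint_dense_isGδ [BaireSpace X] {D G O : Set X}
    (hD : IsGδ D) (hDd : Dense D) (hG : IsGδ G) (hDG : Disjoint D G) (hO : IsOpen O)
    (hne : O.Nonempty) : ¬ O ⊆ closure G := by
  intro hOG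
  have hG' : IsGδ (G ∪ (closure G)ᶜ) := hG.union isClosed_closure.isOpen_compl.isGδ
  have hG'd : Dense (G ∪ (closure G)ᶜ) := by
    refine dense_iff_closure_eq.2 (eq_univ_of_forall fun x => ?_)
    by_cases hx : x ∈ closure G
    · exact closure_mono subset_union_left hx
    · exact subset_closure (Or.inr hx)
  obtain ⟨x, hxO, hxD, hxG | hxG⟩ := (hDd.inter_of_Gδ hD hG' hG'd).inter_open_nonempty O hO hne
  · exact hDG.ne_of_mem hxD hxG rfl
  · exact hxG (hOG hxO)

theorem isGδ_setOf_le_of_tendsto {H : ℕ → X → ℝ} {h : X → ℝ} (hH : ∀ m, Continuous (H m))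
    (hlim : ∀ x, Tendsto (H · x) atTop (𝓝 (h x))) (a : ℝ) : IsGδ {x | h x ≤ a} := by
  have : {x | h x ≤ a} = ⋂ (k : ℕ) (M : ℕ), ⋃ m ≥ M, {x | H m x < a + 1 / (k + 1)} := by
    ext x
    simp only [mem_ofPred_eq, mem_iInter, mem_iUnion, exists_prop]
    constructor
    · intro hx k M
      have hlt : h x < a + 1 / (k + 1) := by
        have : (0 : ℝ) < 1 / (k + 1) := by positivity
        linarith
      exact ((hlim x).eventually (eventually_lt_nhds hlt)).and (eventually_ge_atTop M) |>.exists
        |>.imp fun m hm => ⟨hm.2, hm.1⟩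
    · intro hx
      by_contra! hax
      obtain ⟨k, hk⟩ := exists_nat_one_div_lt (sub_pos.2 hax)
      obtain ⟨M, hM⟩ := eventually_atTop.1
        ((hlim x).eventually (eventually_gt_nhds (by linarith : a + 1 / (k + 1) < h x)))
      obtain ⟨m, hmM, hm⟩ := hx k M
      exact (hM m hmM).not_gt hm
  rw [this]
  exact IsGδ.iInter fun k => IsGδ.iInter_of_isOpen fun M =>
    isOpen_biUnion fun m _ => isOpen_lt (hH m) continuous_const

end

local notation "ℓ∞" => ℕ →ᵇ ℝ

theorem isGδ_setOf_le_of_baireOne {f : ℓ∞ → ℝ} (hf : BaireOne f) (a : ℝ) : IsGδ {x | f x ≤ a} :=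
  let ⟨_, hH, hlim⟩ := hf
  isGδ_setOf_le_of_tendsto hH hlim a

theorem exists_isGδ_iUnion_eq_compl_of_tendsto_indicator {S : Set ℓ∞} {g : ℕ → ℓ∞ → ℝ}
    (hg : ∀ n, BaireOne (g n)) (hlim : ∀ x, Tendsto (g · x) atTop (𝓝 (S.indicator 1 x))) :
    ∃ G : ℕ → Set ℓ∞, (∀ N, IsGδ (G N)) ∧ ⋃ N, G N = Sᶜ := by
  have hsmall : ∀ x, (∀ᶠ n in atTop, g n x ≤ 1 / 2) ↔ x ∉ S := by
    intro x
    by_cases hx : x ∈ S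
    · have hbig : ∀ᶠ n in atTop, 1 / 2 < g n x :=
        (hlim x).eventually (eventually_gt_nhds (by norm_num [hx]))
      simp only [hx, not_true_eq_false, iff_false]
      exact fun h => (hbig.and h).exists.elim fun n hn => hn.2.not_gt hn.1
    · simpa only [hx, not_false_eq_true, iff_true] using
        ((hlim x).eventually (eventually_lt_nhds (by simp [hx]))).mono fun n hn => hn.le
  refine ⟨fun N => ⋂ n ≥ N, {x | g n x ≤ 1 / 2}, fun N =>
    IsGδ.iInter fun n => IsGδ.iInter fun _ => isGδ_setOf_le_of_baireOne (hg n) _, ?_⟩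
  ext x
  simpa [eventually_atTop] using hsmall x

theorem baireOne_indicator_of_isOpen {W : Set ℓ∞} (hW : IsOpen W) : BaireOne (W.indicator 1) := by
  have hδ : ∀ n : ℕ, (0 : ℝ) < 1 / (n + 1) := fun n => Nat.one_div_pos_of_nat
  refine ⟨fun n x => 1 - (thickenedIndicator (hδ n) Wᶜ x : ℝ), fun n => ?_, fun x => ?_⟩
  · exact continuous_const.sub
      (NNReal.continuous_coe.comp (thickenedIndicator (hδ n) Wᶜ).continuous)
  · have h := tendsto_pi_nhds.1
      (thickenedIndicator_tendsto_indicator_closure hδ tendsto_one_div_add_atTop_nhds_zero_nat Wᶜ) x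
    convert ((NNReal.continuous_coe.tendsto _).comp h).const_sub 1 using 2
    · rfl
    · rw [hW.isClosed_compl.closure_eq]
      by_cases hx : x ∈ W <;> simp [hx]

theorem baireTwo_indicator_of_isGδ {G : Set ℓ∞} (hG : IsGδ G) : BaireTwo (G.indicator 1) := by
  obtain ⟨V, hV, rfl⟩ := isGδ_iff_eq_iInter_nat.1 hG
  have hanti : Antitone fun K => ⋂ k ∈ Finset.range K, V k := fun K L hKL =>
    biInter_subset_biInter_left fun k hk => Finset.range_subset_range.2 hKL hk
  have hinter : ⋂ K, ⋂ k ∈ Finset.range K, V k = ⋂ k, V k := by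
    ext x
    simp only [mem_iInter, Finset.mem_range]
    exact ⟨fun h k => h (k + 1) k (Nat.lt_succ_self k), fun h _ k _ => h k⟩
  refine ⟨fun K => (⋂ k ∈ Finset.range K, V k).indicator 1, fun K =>
    baireOne_indicator_of_isOpen (isOpen_biInter_finset fun k _ => hV k), fun x => ?_⟩
  rw [← hinter]
  exact (hanti.tendsto_indicator _ _ x).mono_right (pure_le_nhds _)

theorem exists_baireTwo_tendsto_indicator_iUnion {Q : ℕ → Set ℓ∞} (hQ : ∀ m, IsGδ (Q m))
    (hmono : Monotone Q) : ∃ g : ℕ → ℓ∞ → ℝ, (∀ n, BaireTwo (g n)) ∧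
      ∀ x, Tendsto (g · x) atTop (𝓝 ((⋃ m, Q m).indicator 1 x)) :=
  ⟨fun m => (Q m).indicator 1, fun m => baireTwo_indicator_of_isGδ (hQ m),
    fun x => (hmono.tendsto_indicator _ _ x).mono_right (pure_le_nhds _)⟩

theorem ssc_of_eventuallyEq {f : ℓ∞ → ℝ}
    (hf : ∀ x z : ℓ∞, (∀ᶠ n in atTop, x n = z n) → f x = f z) : SSC f := by
  intro _ k ε hε
  refine ⟨1, one_pos, fun x _ z _ hz => ?_⟩
  rw [hf x z (eventually_gt_atTop k |>.mono fun n hn => (hz n hn.ne').symm), sub_self, abs_zero]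
  exact hε

def nonvanishingRow (i : ℕ) : Set ℓ∞ := {x | ∃ ε > 0, ∃ᶠ j in atTop, ε ≤ |x (Nat.pair i j)|}

def almostAllRowsNonvanishing : Set ℓ∞ := ⋃ m, ⋂ i ≥ m, nonvanishingRow i

theorem isOpen_nonvanishingRow (i : ℕ) : IsOpen (nonvanishingRow i) := by
  refine Metric.isOpen_iff.2 fun x ⟨ε, hε, hx⟩ => ⟨ε / 2, half_pos hε, fun y hy => ?_⟩
  refine ⟨ε / 2, half_pos hε, hx.mono fun j hj => ?_⟩
  have hyx : |y (Nat.pair i j) - x (Nat.pair i j)| < ε / 2 :=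
    (dist_coe_le_dist (Nat.pair i j)).trans_lt hy
  have := abs_sub_abs_le_abs_sub (x (Nat.pair i j)) (y (Nat.pair i j))
  rw [abs_sub_comm] at hyx
  linarith

theorem mem_nonvanishingRow_congr {x z : ℓ∞} (h : ∀ᶠ n in atTop, x n = z n) (i : ℕ) :
    x ∈ nonvanishingRow i ↔ z ∈ nonvanishingRow i := by
  have hrow : ∀ᶠ j in atTop, x (Nat.pair i j) = z (Nat.pair i j) :=
    (tendsto_atTop_mono (Nat.right_le_pair i) tendsto_id).eventually h
  simp only [nonvanishingRow, mem_ofPred_eq]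
  refine exists_congr fun ε => and_congr_right' (frequently_congr (hrow.mono fun j hj => ?_))
  rw [hj]

theorem mem_almostAllRowsNonvanishing_congr {x z : ℓ∞} (h : ∀ᶠ n in atTop, x n = z n) :
    x ∈ almostAllRowsNonvanishing ↔ z ∈ almostAllRowsNonvanishing := by
  simp only [almostAllRowsNonvanishing, mem_iUnion, mem_iInter, mem_nonvanishingRow_congr h]

theorem mem_almostAllRowsNonvanishing {x : ℓ∞} :
    x ∈ almostAllRowsNonvanishing ↔ ∀ᶠ i in atTop, x ∈ nonvanishingRow i := by
  simp [almostAllRowsNonvanishing, eventually_atTop]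

theorem biInter_nonvanishingRow_subset (R : Finset ℕ) :
    ⋂ i ∈ (R : Set ℕ)ᶜ, nonvanishingRow i ⊆ almostAllRowsNonvanishing := by
  intro x hx
  obtain ⟨m, hm⟩ := eventually_atTop.1 (Nat.cofinite_eq_atTop ▸ R.eventually_cofinite_notMem)
  exact mem_iUnion.2 ⟨m, mem_iInter₂.2 fun i hi => mem_iInter₂.1 hx _ (hm i hi)⟩

-- Row `i` is capped at `2⁻ⁱ`, so that zeroing a far row is a small perturbation.
noncomputable def rowBound (R : Finset ℕ) (i : ℕ) : ℝ := if i ∈ R then 0 else (1 / 2) ^ i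

def cube (R : Finset ℕ) : Set ℓ∞ := {x | ∀ n, x n ∈ Icc 0 (rowBound R (Nat.unpair n).1)}

theorem rowBound_le (R : Finset ℕ) (i : ℕ) : rowBound R i ≤ (1 / 2) ^ i := by
  unfold rowBound
  split_ifs <;> first | positivity | rfl

theorem isClosed_cube (R : Finset ℕ) : IsClosed (cube R) := by
  simp only [cube, ofPred_forall]
  exact isClosed_iInter fun n => isClosed_Icc.preimage (continuous_eval_const n)

theorem zero_mem_cube (R : Finset ℕ) : 0 ∈ cube R := fun n => by
  refine ⟨le_rfl, ?_⟩
  unfold rowBound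
  split_ifs <;> simp

theorem cube_insert_subset (i : ℕ) (R : Finset ℕ) : cube (insert i R) ⊆ cube R := by
  refine fun x hx n => ⟨(hx n).1, (hx n).2.trans ?_⟩
  unfold rowBound
  split_ifs <;> first | positivity | rfl | simp_all

theorem notMem_nonvanishingRow_of_mem_cube {R : Finset ℕ} {x : ℓ∞} (hx : x ∈ cube R) {i : ℕ}
    (hi : i ∈ R) : x ∉ nonvanishingRow i := by
  rintro ⟨ε, hε, hfreq⟩
  obtain ⟨j, hj⟩ := hfreq.exists
  have hzero : x (Nat.pair i j) = 0 := by
    simpa [rowBound, hi, le_antisymm_iff] using hx (Nat.pair i j)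
  rw [hzero, abs_zero] at hj
  exact hε.not_ge hj

noncomputable def zeroRow (x : ℓ∞) (i : ℕ) : ℓ∞ :=
  ofNormedAddCommGroupDiscrete (fun n => if (Nat.unpair n).1 = i then 0 else x n) ‖x‖ fun n => by
    split_ifs
    · simp
    · exact x.norm_coe_le_norm n

theorem zeroRow_apply (x : ℓ∞) (i n : ℕ) :
    zeroRow x i n = if (Nat.unpair n).1 = i then 0 else x n := rfl

theorem zeroRow_mem_cube {R : Finset ℕ} {x : ℓ∞} (hx : x ∈ cube R) (i : ℕ) :
    zeroRow x i ∈ cube (insert i R) := fun n => by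
  rw [zeroRow_apply]
  split_ifs with h
  · simp [rowBound, h]
  · simpa [rowBound, h] using hx n

theorem dist_zeroRow_le {R : Finset ℕ} {x : ℓ∞} (hx : x ∈ cube R) (i : ℕ) :
    dist (zeroRow x i) x ≤ (1 / 2) ^ i := by
  refine (dist_le (by positivity)).2 fun n => ?_
  rw [zeroRow_apply]
  split_ifs with h
  · rw [dist_comm, Real.dist_eq, sub_zero, abs_of_nonneg (hx n).1, ← h]
    exact (hx n).2.trans (rowBound_le R _)
  · simp only [dist_self]
    positivity

noncomputable def raiseRow (x : ℓ∞) (i : ℕ) (a : ℝ) : ℓ∞ :=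
  ofNormedAddCommGroupDiscrete (fun n => if (Nat.unpair n).1 = i then max (x n) a else x n)
    (‖x‖ + |a|) fun n => by
      have hxn : ‖x n‖ ≤ ‖x‖ + |a| :=
        (x.norm_coe_le_norm n).trans (le_add_of_nonneg_right (abs_nonneg a))
      split_ifs
      · exact abs_max_le_max_abs_abs.trans (max_le hxn (le_add_of_nonneg_left (norm_nonneg x)))
      · exact hxn

theorem raiseRow_apply (x : ℓ∞) (i : ℕ) (a : ℝ) (n : ℕ) :
    raiseRow x i a n = if (Nat.unpair n).1 = i then max (x n) a else x n := rfl

theorem raiseRow_mem_nonvanishingRow (x : ℓ∞) (i : ℕ) {a : ℝ} (ha : 0 < a) :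
    raiseRow x i a ∈ nonvanishingRow i :=
  ⟨a, ha, Frequently.of_forall fun j => by
    simp only [raiseRow_apply, Nat.unpair_pair, if_true]
    exact (le_max_right _ _).trans (le_abs_self _)⟩

theorem raiseRow_mem_cube {R : Finset ℕ} {x : ℓ∞} (hx : x ∈ cube R) {i : ℕ} (hi : i ∉ R) {a : ℝ}
    (ha : a ≤ (1 / 2) ^ i) : raiseRow x i a ∈ cube R := fun n => by
  rw [raiseRow_apply]
  split_ifs with h
  · subst h
    exact ⟨(hx n).1.trans (le_max_left _ _),
      max_le (hx n).2 (by simpa [rowBound, hi] using ha)⟩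
  · exact hx n

theorem dist_raiseRow_le {R : Finset ℕ} {x : ℓ∞} (hx : x ∈ cube R) (i : ℕ) {a : ℝ} (ha : 0 ≤ a) :
    dist (raiseRow x i a) x ≤ a := by
  refine (dist_le ha).2 fun n => ?_
  rw [raiseRow_apply]
  split_ifs
  · rw [Real.dist_eq, abs_of_nonneg (sub_nonneg.2 (le_max_left _ _)), sub_le_iff_le_add]
    exact max_le (le_add_of_nonneg_left ha) (le_add_of_nonneg_right (hx n).1)
  · simpa using ha

theorem dense_preimage_nonvanishingRow_cube {R : Finset ℕ} {i : ℕ} (hi : i ∉ R) :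
    Dense (((↑) : cube R → ℓ∞) ⁻¹' nonvanishingRow i) := by
  refine Metric.dense_iff.2 fun y r hr => ?_
  set a := min (r / 2) ((1 / 2) ^ i)
  have ha : 0 < a := lt_min (half_pos hr) (by positivity)
  refine ⟨⟨raiseRow y i a, raiseRow_mem_cube y.2 hi (min_le_right _ _)⟩, ?_,
    raiseRow_mem_nonvanishingRow y i ha⟩
  calc dist (raiseRow y i a) y ≤ a := dist_raiseRow_le y.2 i ha.le
    _ ≤ r / 2 := min_le_left _ _
    _ < r := half_lt_self hr

theorem exists_ball_cube_subset_diff {R : Finset ℕ} {c : ℓ∞} (hc : c ∈ cube R) {ρ : ℝ}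
    (hρ : 0 < ρ) {G : Set ℓ∞} (hG : IsGδ G) (hGA : Disjoint G almostAllRowsNonvanishing) :
    ∃ x ∈ cube R, ∃ r > 0, ∀ y ∈ cube R, dist y x < r → y ∈ ball c ρ \ G := by
  have : CompleteSpace (cube R) := (isClosed_cube R).completeSpace_coe
  let D : Set (cube R) := ⋂ i ∈ (R : Set ℕ)ᶜ, (↑) ⁻¹' nonvanishingRow i
  have hD : IsGδ D := IsGδ.biInter (to_countable _) fun i _ =>
    ((isOpen_nonvanishingRow i).preimage continuous_subtype_val).isGδ
  have hDd : Dense D := dense_biInter_of_isOpen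
    (fun i _ => (isOpen_nonvanishingRow i).preimage continuous_subtype_val) (to_countable _)
    fun _ hi => dense_preimage_nonvanishingRow_cube hi
  have hDG : Disjoint D ((↑) ⁻¹' G) := by
    refine disjoint_left.2 fun x hxD hxG =>
      hGA.ne_of_mem hxG (biInter_nonvanishingRow_subset R ?_) rfl
    simp only [D, mem_iInter, mem_preimage] at hxD
    exact mem_iInter₂.2 hxD
  have hO : ((↑) ⁻¹' ball c ρ : Set (cube R)).Nonempty :=
    ⟨⟨c, hc⟩, show c ∈ ball c ρ from mem_ball_self hρ⟩
  obtain ⟨x, hxO, hxG⟩ := not_subset.1 <| not_subset_closure_of_disjoint_dense_isGδ hD hDd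
    (hG.preimage continuous_subtype_val) hDG (isOpen_ball.preimage continuous_subtype_val) hO
  have hopen : IsOpen (((↑) ⁻¹' ball c ρ : Set (cube R)) \ closure ((↑) ⁻¹' G)) :=
    (isOpen_ball.preimage continuous_subtype_val).sdiff isClosed_closure
  obtain ⟨r, hr, hball⟩ := Metric.isOpen_iff.1 hopen x ⟨hxO, hxG⟩
  refine ⟨x, x.2, r, hr, fun y hy hyx => ?_⟩
  obtain ⟨hyc, hyG⟩ := hball (show (⟨y, hy⟩ : cube R) ∈ ball x r from hyx)
  exact ⟨hyc, fun h => hyG (subset_closure (show (⟨y, hy⟩ : cube R) ∈ (↑) ⁻¹' G from h))⟩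

structure Condition where
  center : ℓ∞
  radius : ℝ
  frozen : Finset ℕ
  radius_pos : 0 < radius
  center_mem : center ∈ cube frozen

namespace Condition

def carrier (p : Condition) : Set ℓ∞ := closedBall p.center p.radius ∩ cube p.frozen

theorem center_mem_carrier (p : Condition) : p.center ∈ p.carrier :=
  ⟨mem_closedBall_self p.radius_pos.le, p.center_mem⟩

theorem isClosed_carrier (p : Condition) : IsClosed p.carrier :=
  isClosed_closedBall.inter (isClosed_cube _)

theorem exists_refine (p : Condition) {G : Set ℓ∞} (hG : IsGδ G)
    (hGA : Disjoint G almostAllRowsNonvanishing) (n : ℕ) :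
    ∃ q : Condition, q.carrier ⊆ p.carrier \ G ∧ q.radius ≤ p.radius / 2 ∧
      ∃ i ∈ q.frozen, n ≤ i := by
  obtain ⟨x, hx, r, hr, hball⟩ := exists_ball_cube_subset_diff p.center_mem p.radius_pos hG hGA
  set s := min r p.radius / 4
  have hs : 0 < s := by have := lt_min hr p.radius_pos; positivity
  have hsr : s + s < r := by have := min_le_left r p.radius; simp only [s]; linarith
  have hsρ : s ≤ p.radius / 2 := by
    have := min_le_right r p.radius; have := p.radius_pos; simp only [s]; linarith
  obtain ⟨k, hk⟩ := exists_pow_lt_of_lt_one hs (by norm_num : (1 / 2 : ℝ) < 1)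
  have hw : (1 / 2 : ℝ) ^ (n + k) < s :=
    (pow_le_pow_of_le_one (by norm_num) (by norm_num) (Nat.le_add_left k n)).trans_lt hk
  refine ⟨⟨zeroRow x (n + k), s, insert (n + k) p.frozen, hs, zeroRow_mem_cube hx _⟩, ?_, ?_,
    n + k, Finset.mem_insert_self _ _, Nat.le_add_right n k⟩
  · rintro y ⟨hy, hyR⟩
    have hyx : dist y x < r := calc
      dist y x ≤ dist y (zeroRow x (n + k)) + dist (zeroRow x (n + k)) x := dist_triangle _ _ _
      _ < s + s := add_lt_add_of_le_of_lt hy ((dist_zeroRow_le hx _).trans_lt hw)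
      _ < r := hsr
    obtain ⟨hyc, hyG⟩ := hball y (cube_insert_subset _ _ hyR) hyx
    exact ⟨⟨ball_subset_closedBall hyc, cube_insert_subset _ _ hyR⟩, hyG⟩
  · exact hsρ

theorem nonempty_iInter_carrier (p : ℕ → Condition)
    (hsub : ∀ n, (p (n + 1)).carrier ⊆ (p n).carrier)
    (hrad : ∀ n, (p (n + 1)).radius ≤ (p n).radius / 2) : (⋂ n, (p n).carrier).Nonempty := by
  have hanti : Antitone fun n => (p n).carrier := antitone_nat_of_succ_le hsub
  have hrad_le : ∀ n, (p n).radius ≤ (p 0).radius * (1 / 2) ^ n := by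
    intro n
    induction n with
    | zero => simp
    | succ n ih => rw [pow_succ]; linarith [hrad n]
  refine Metric.nonempty_iInter_of_nonempty_biInter (fun n => (p n).isClosed_carrier)
    (fun n => isBounded_closedBall.subset inter_subset_left)
    (fun N => ⟨(p N).center, mem_iInter₂.2 fun n hn => hanti hn (p N).center_mem_carrier⟩) ?_
  have hlim : Tendsto (fun n => 2 * (p 0).radius * (1 / 2 : ℝ) ^ n) atTop (𝓝 0) := by
    simpa using (tendsto_pow_atTop_nhds_zero_of_lt_one (by norm_num)
      (by norm_num : (1 / 2 : ℝ) < 1)).const_mul (2 * (p 0).radius)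
  refine squeeze_zero (fun n => diam_nonneg) (fun n => ?_) hlim
  calc diam (p n).carrier ≤ diam (closedBall (p n).center (p n).radius) :=
        diam_mono inter_subset_left isBounded_closedBall
    _ ≤ 2 * (p n).radius := diam_closedBall (p n).radius_pos.le
    _ ≤ 2 * (p 0).radius * (1 / 2) ^ n := by linarith [hrad_le n]

end Condition

theorem not_exists_iUnion_isGδ_eq_compl :
    ¬ ∃ G : ℕ → Set ℓ∞, (∀ N, IsGδ (G N)) ∧ ⋃ N, G N = almostAllRowsNonvanishingᶜ := by
  rintro ⟨G, hG, hGA⟩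
  have hdisj : ∀ N, Disjoint (G N) almostAllRowsNonvanishing := fun N =>
    subset_compl_iff_disjoint_right.1 (hGA ▸ subset_iUnion G N)
  choose next hnext_sub hnext_rad hnext_frozen using
    fun (q : Condition) N => q.exists_refine (hG N) (hdisj N) N
  let p : ℕ → Condition := fun N =>
    Nat.rec ⟨0, 1, ∅, one_pos, zero_mem_cube ∅⟩ (fun N q => next q N) N
  obtain ⟨z, hz⟩ := Condition.nonempty_iInter_carrier p
    (fun N => (hnext_sub _ N).trans sdiff_subset) (fun N => hnext_rad _ N)
  have hzA : z ∉ almostAllRowsNonvanishing := fun hzA => by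
    obtain ⟨m, hm⟩ := eventually_atTop.1 (mem_almostAllRowsNonvanishing.1 hzA)
    obtain ⟨i, hi, hmi⟩ := hnext_frozen (p m) m
    exact notMem_nonvanishingRow_of_mem_cube (mem_iInter.1 hz (m + 1)).2 hi (hm i hmi)
  obtain ⟨N, hN⟩ := mem_iUnion.1 (hGA.symm ▸ hzA : z ∈ ⋃ N, G N)
  exact (hnext_sub (p N) N (mem_iInter.1 hz (N + 1))).2 hN

theorem indicator_almostAllRowsNonvanishing_mem_Icc (x : ℓ∞) :
    almostAllRowsNonvanishing.indicator 1 x ∈ Icc (0 : ℝ) 1 := by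
  by_cases hx : x ∈ almostAllRowsNonvanishing <;> simp [hx]

theorem ssc_indicator_almostAllRowsNonvanishing : SSC (almostAllRowsNonvanishing.indicator 1) :=
  ssc_of_eventuallyEq fun x z h => by
    classical
    simp only [Set.indicator_apply, mem_almostAllRowsNonvanishing_congr h, Pi.one_apply]

theorem exists_baireTwo_tendsto_indicator_almostAllRowsNonvanishing :
    ∃ g : ℕ → ℓ∞ → ℝ, (∀ n, BaireTwo (g n)) ∧
      ∀ x, Tendsto (g · x) atTop (𝓝 (almostAllRowsNonvanishing.indicator 1 x)) :=
  exists_baireTwo_tendsto_indicator_iUnion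
    (fun _ => IsGδ.iInter fun i => IsGδ.iInter fun _ => (isOpen_nonvanishingRow i).isGδ)
    fun _ _ h _ hx => mem_iInter₂.2 fun i hi => mem_iInter₂.1 hx i (h.trans hi)

theorem not_exists_baireOne_tendsto_indicator_almostAllRowsNonvanishing :
    ¬ ∃ g : ℕ → ℓ∞ → ℝ, (∀ n, BaireOne (g n)) ∧
      ∀ x, Tendsto (g · x) atTop (𝓝 (almostAllRowsNonvanishing.indicator 1 x)) :=
  fun ⟨_, hg, hlim⟩ =>
    not_exists_iUnion_isGδ_eq_compl (exists_isGδ_iUnion_eq_compl_of_tendsto_indicator hg hlim)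

end SSCBaireThree

/-- There is a strongly separately continuous `f : ℓ∞ → [0,1]` which is a pointwise
limit of a sequence of Baire class 2 functions (hence of Baire class 3), but is not a
pointwise limit of any sequence of Baire class 1 functions. -/
theorem exists_ssc_baire_three_not_baire_two :
    ∃ f : (ℕ →ᵇ ℝ) → ℝ,
      (∀ x, f x ∈ Set.Icc (0 : ℝ) 1) ∧
      SSC f ∧
      (∃ g : ℕ → (ℕ →ᵇ ℝ) → ℝ, (∀ n, BaireTwo (g n)) ∧
        ∀ x, Tendsto (fun n => g n x) atTop (nhds (f x))) ∧
      ¬ (∃ g : ℕ → (ℕ →ᵇ ℝ) → ℝ, (∀ n, BaireOne (g n)) ∧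
        ∀ x, Tendsto (fun n => g n x) atTop (nhds (f x))) := by
  open SSCBaireThree in
  exact ⟨almostAllRowsNonvanishing.indicator 1, indicator_almostAllRowsNonvanishing_mem_Icc,
    ssc_indicator_almostAllRowsNonvanishing,
    exists_baireTwo_tendsto_indicator_almostAllRowsNonvanishing,
    not_exists_baireOne_tendsto_indicator_almostAllRowsNonvanishing⟩
end
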